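/- arXiv:0809.1604 — 4 statements merged into one kernel-verified Lean document; each statement's English description precedes it below -/
import Mathlib

section
/- If x_0, ..., x_l is a log-concave sequence of positive reals, then the sequence of partial sums X_m = x_0 + ... + x_m is also log-concave, i.e., X_{m-1} X_{m+1} ≤ X_m^2 for 0 < m < l. -/
/-!
Log-concavity makes the ratios `x (i + 1) / x i` decrease, so `x i * x (m + 1) ≤ x (i + 1) * x m`
for every `i < m`. Summing over `i < m` gives `X_{m-1} x_{m+1} ≤ x_m (X_m - x_0) ≤ x_m X_m`,
which after writing `X_m = X_{m-1} + x_m` and `X_{m+1} = X_m + x_{m+1}` is exactly the claim.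
-/

open Finset

theorem mul_succ_le_succ_mul_of_logConcave {l : ℕ} {x : ℕ → ℝ}
    (hx : ∀ i, i ≤ l → 0 < x i)
    (hlc : ∀ i, 0 < i → i < l → x (i - 1) * x (i + 1) ≤ x i ^ 2)
    {i j : ℕ} (hij : i ≤ j) (hjl : j < l) :
    x i * x (j + 1) ≤ x (i + 1) * x j := by
  induction j, hij using Nat.le_induction with
  | base => exact (mul_comm _ _).le
  | succ j hij ih =>
    have hj : 0 < x j := hx j (by omega)
    have hlc_j : x j * x (j + 2) ≤ x (j + 1) ^ 2 := hlc (j + 1) (by omega) hjl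
    refine le_of_mul_le_mul_right ?_ hj
    calc x i * x (j + 1 + 1) * x j = x i * (x j * x (j + 2)) := by ring
      _ ≤ x i * x (j + 1) ^ 2 := by gcongr; exact (hx i (by omega)).le
      _ = x i * x (j + 1) * x (j + 1) := by ring
      _ ≤ x (i + 1) * x j * x (j + 1) :=
          mul_le_mul_of_nonneg_right (ih (by omega)) (hx (j + 1) (by omega)).le
      _ = x (i + 1) * x (j + 1) * x j := by ring

theorem sum_range_mul_le_mul_sum_range_succ_of_logConcave {l : ℕ} {x : ℕ → ℝ}
    (hx : ∀ i, i ≤ l → 0 < x i)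
    (hlc : ∀ i, 0 < i → i < l → x (i - 1) * x (i + 1) ≤ x i ^ 2)
    {m : ℕ} (hml : m < l) :
    (∑ i ∈ range m, x i) * x (m + 1) ≤ x m * ∑ i ∈ range (m + 1), x i := by
  have h_shift : ∑ i ∈ range m, x (i + 1) ≤ ∑ i ∈ range (m + 1), x i := by
    rw [sum_range_succ' x m]
    exact le_add_of_nonneg_right (hx 0 (Nat.zero_le l)).le
  calc (∑ i ∈ range m, x i) * x (m + 1)
      = ∑ i ∈ range m, x i * x (m + 1) := sum_mul _ _ _
    _ ≤ ∑ i ∈ range m, x (i + 1) * x m := by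
        refine sum_le_sum fun i hi => ?_
        exact mul_succ_le_succ_mul_of_logConcave hx hlc (mem_range.mp hi).le hml
    _ = x m * ∑ i ∈ range m, x (i + 1) := by rw [mul_sum]; simp only [mul_comm]
    _ ≤ x m * ∑ i ∈ range (m + 1), x i := by
        gcongr
        exact (hx m hml.le).le

open Finset in
/-- partial sums of a positive log-concave sequence are log-concave. -/
theorem partialSums_logConcave (l : ℕ) (x : ℕ → ℝ)
    (hx : ∀ i, i ≤ l → 0 < x i)
    (hlc : ∀ i, 0 < i → i < l → x (i - 1) * x (i + 1) ≤ x i ^ 2) :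
    ∀ m, 0 < m → m < l →
      (∑ i ∈ range m, x i) * (∑ i ∈ range (m + 2), x i) ≤
      (∑ i ∈ range (m + 1), x i) ^ 2 := by
  intro m _ hml
  have key := sum_range_mul_le_mul_sum_range_succ_of_logConcave hx hlc hml
  rw [sum_range_succ _ (m + 1)] at *
  rw [sum_range_succ _ m] at *
  linear_combination key
end

section
/- With N(m, n, λ) the number of lattice paths in the m×n grid avoiding the removed Ferrers diagram of λ, for all valid m, n one has N(m, n+1, λ) · N(m+1, n, λ) ≤ N(m, n, λ) · N(m+1, n+1, λ). -/
/-! Embed all four path families in the set `S` of admissible sequences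
`Fin (m + 1) → Fin (n + 2)`: a path counted by `N(m, n+1)` gets the forced bottom row `λ_{m+1}`,
one counted by `N(m+1, n)` is a sequence with all entries `≤ n`, and one counted by `N(m, n)`
satisfies both constraints. `S` is a sublattice of the distributive lattice of functions and both
constraints are down-closed, so Daykin's inequality `|A| |B| ≤ |A ⊼ B| |A ⊻ B|` gives the claim. -/

/-- A partition given as an antitone, eventually-zero function `ℕ → ℕ`
(0-indexed: `lam 0` is the largest part `λ₁`). -/
def IsPartitionFun (lam : ℕ → ℕ) : Prop :=
  Antitone lam ∧ ∃ r : ℕ, ∀ i, r ≤ i → lam i = 0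

/-- The conjugate partition: `conjPart lam j = #{i : lam i > j}` (0-indexed,
so `conjPart lam 0` is `λ'₁`, the number of nonzero parts). -/
noncomputable def conjPart (lam : ℕ → ℕ) (j : ℕ) : ℕ := Nat.card {i : ℕ // j < lam i}

/-- `latticeN m n lam` is the number of monotone lattice paths (unit up/right
steps) from the lower-left to the upper-right corner of the `m`-row,
`n`-column grid that never go inside the Ferrers diagram of `lam` removed
from the upper-left corner.  Such paths are in bijection with antitone
sequences `μ : Fin m → {0,...,n}` (row `i` of the region weakly above-left of
the path) with `lam i ≤ μ i` for every row `i`. -/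
def latticeN (m n : ℕ) (lam : ℕ → ℕ) : ℕ :=
  (Finset.univ.filter (fun mu : Fin m → Fin (n + 1) =>
    (∀ i j : Fin m, i ≤ j → mu j ≤ mu i) ∧ ∀ i : Fin m, lam i ≤ (mu i : ℕ))).card

open Finset

theorem Finset.card_filter_mul_card_filter_le_card_filter_and_mul_card
    {α : Type*} [DistribLattice α] [DecidableEq α] {s : Finset α}
    (hs_inf : InfClosed (s : Set α)) (hs_sup : SupClosed (s : Set α))
    {p q : α → Prop} [DecidablePred p] [DecidablePred q] (hp : Antitone p) (hq : Antitone q) :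
    #(s.filter p) * #(s.filter q) ≤ #(s.filter fun a => p a ∧ q a) * #s := by
  refine (le_card_infs_mul_card_sups _ _).trans
    (Nat.mul_le_mul (card_le_card ?_) (card_le_card ?_))
  · refine infs_subset_iff.2 fun a ha b hb => ?_
    rw [mem_filter] at ha hb ⊢
    exact ⟨hs_inf ha.1 hb.1, hp inf_le_left ha.2, hq inf_le_right hb.2⟩
  · exact sups_subset_iff.2 fun a ha b hb => hs_sup (mem_filter.1 ha).1 (mem_filter.1 hb).1

theorem Fin.antitone_snoc {α : Type*} [Preorder α] {m : ℕ} {f : Fin m → α} (hf : Antitone f)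
    {c : α} (hc : ∀ i, c ≤ f i) : Antitone (Fin.snoc (α := fun _ => α) f c) := by
  intro i j hij
  induction j using Fin.lastCases with
  | last =>
    induction i using Fin.lastCases with
    | last => exact le_rfl
    | cast i => simpa using hc i
  | cast j =>
    induction i using Fin.lastCases with
    | last => exact absurd hij (Fin.castSucc_lt_last j).not_ge
    | cast i => simpa using hf (Fin.castSucc_le_castSucc_iff.1 hij)

section Admissible

variable (lam : ℕ → ℕ)

def admissible (m n : ℕ) : Finset (Fin m → Fin (n + 1)) :=
  univ.filter fun mu => (∀ i j : Fin m, i ≤ j → mu j ≤ mu i) ∧ ∀ i : Fin m, lam i ≤ (mu i : ℕ)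

variable {lam}

theorem card_admissible (m n : ℕ) : #(admissible lam m n) = latticeN m n lam := rfl

theorem mem_admissible {m n : ℕ} {mu : Fin m → Fin (n + 1)} :
    mu ∈ admissible lam m n ↔ Antitone mu ∧ ∀ i : Fin m, lam i ≤ (mu i : ℕ) := by
  simp [admissible, Antitone]

theorem infClosed_admissible (m n : ℕ) :
    InfClosed (admissible lam m n : Set (Fin m → Fin (n + 1))) := by
  intro a ha b hb
  rw [mem_coe, mem_admissible] at *
  exact ⟨ha.1.inf hb.1, fun i => le_min (ha.2 i) (hb.2 i)⟩

theorem supClosed_admissible (m n : ℕ) :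
    SupClosed (admissible lam m n : Set (Fin m → Fin (n + 1))) := by
  intro a ha b hb
  rw [mem_coe, mem_admissible] at *
  exact ⟨ha.1.sup hb.1, fun i => le_max_of_le_left (ha.2 i)⟩

theorem map_castSucc_admissible (m n : ℕ) :
    (admissible lam m n).map Fin.castSuccEmb.arrowCongrRight =
      (admissible lam m (n + 1)).filter fun σ => ∀ i, (σ i : ℕ) ≤ n := by
  ext σ
  simp only [mem_map, mem_filter, mem_admissible]
  constructor
  · rintro ⟨mu, ⟨hmu, hlow⟩, rfl⟩
    exact ⟨⟨Fin.strictMono_castSucc.monotone.comp_antitone hmu, hlow⟩,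
      fun i => Nat.lt_succ_iff.1 (mu i).2⟩
  · rintro ⟨⟨hσ, hlow⟩, hle⟩
    exact ⟨fun i => ⟨σ i, Nat.lt_succ_of_le (hle i)⟩, ⟨fun _ _ hij => hσ hij, hlow⟩, rfl⟩

theorem map_snoc_admissible (hlam : Antitone lam) {m k : ℕ} (hk : lam m ≤ k) :
    (admissible lam m k).map
        ⟨(Fin.snoc · ⟨lam m, Nat.lt_succ_of_le hk⟩), Fin.snoc_left_injective (α := fun _ => _) _⟩ =
      (admissible lam (m + 1) k).filter fun σ => (σ (Fin.last m) : ℕ) ≤ lam m := by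
  ext σ
  simp only [mem_map, mem_filter, mem_admissible, Function.Embedding.coeFn_mk]
  constructor
  · rintro ⟨mu, ⟨hmu, hlow⟩, rfl⟩
    refine ⟨⟨Fin.antitone_snoc hmu fun i => (hlam i.is_lt.le).trans (hlow i), fun i => ?_⟩,
      by simp⟩
    induction i using Fin.lastCases with
    | last => simp
    | cast i => simpa using hlow i
  · rintro ⟨⟨hσ, hlow⟩, hlast⟩
    refine ⟨Fin.init σ, ⟨hσ.comp_monotone Fin.strictMono_castSucc.monotone,
      fun i => by simpa [Fin.init] using hlow i.castSucc⟩, ?_⟩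
    have hσ_last : (⟨lam m, Nat.lt_succ_of_le hk⟩ : Fin (k + 1)) = σ (Fin.last m) :=
      Fin.ext (le_antisymm (by simpa using hlow (Fin.last m)) hlast)
    rw [hσ_last, Fin.snoc_init_self]

end Admissible

theorem latticeN_ineq_one_general (lam : ℕ → ℕ) (hlam : IsPartitionFun lam)
    (m n : ℕ) (hn : lam 0 ≤ n) :
    latticeN m (n + 1) lam * latticeN (m + 1) n lam ≤
      latticeN m n lam * latticeN (m + 1) (n + 1) lam := by
  have hlm : lam m ≤ n := (hlam.1 (Nat.zero_le m)).trans hn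
  set S := admissible lam (m + 1) (n + 1)
  set p : (Fin (m + 1) → Fin (n + 2)) → Prop := fun σ => (σ (Fin.last m) : ℕ) ≤ lam m
  set q : (Fin (m + 1) → Fin (n + 2)) → Prop := fun σ => ∀ i, (σ i : ℕ) ≤ n
  have hp_card : #(S.filter p) = latticeN m (n + 1) lam := by
    rw [← map_snoc_admissible hlam.1 (hlm.trans n.le_succ), card_map, card_admissible]
  have hq_card : #(S.filter q) = latticeN (m + 1) n lam := by
    rw [← map_castSucc_admissible, card_map, card_admissible]
  have hpq_card : #(S.filter fun σ => p σ ∧ q σ) = latticeN m n lam := by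
    rw [← filter_filter, filter_comm, ← map_castSucc_admissible, filter_map, card_map]
    exact (congrArg card (map_snoc_admissible hlam.1 hlm)).symm.trans (card_map _)
  rw [← hp_card, ← hq_card, ← hpq_card, ← card_admissible]
  exact card_filter_mul_card_filter_le_card_filter_and_mul_card (infClosed_admissible _ _)
    (supClosed_admissible _ _) (fun _ _ h hτ => (Fin.le_def.1 (h _)).trans hτ)
    fun _ _ h hτ i => (Fin.le_def.1 (h i)).trans (hτ i)

/-- N(m, n+1, λ) · N(m+1, n, λ) ≤ N(m, n, λ) · N(m+1, n+1, λ). -/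
theorem latticeN_ineq_one (lam : ℕ → ℕ) (hlam : IsPartitionFun lam)
    (m n : ℕ) (hm : conjPart lam 0 ≤ m) (hn : lam 0 ≤ n) :
    latticeN m (n + 1) lam * latticeN (m + 1) n lam ≤
      latticeN m n lam * latticeN (m + 1) (n + 1) lam :=
  latticeN_ineq_one_general lam hlam m n hn
end

section
/- With N(m, n, λ) the number of lattice paths in the m×n grid avoiding the removed Ferrers diagram of λ, for all valid m ≥ λ'_1 + 1 and n, one has N(m−1, n+1, λ) · N(m+1, n+1, λ) ≤ N(m, n+1, λ)^2; that is, N(m, n, λ) is log-concave in m for fixed n. -/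
/-!
Encode a path by the antitone sequence of its row lengths. Given paths `μ` with `m - 1` rows and
`ν` with `m + 1` rows, put a full row on top of `μ`. The two paths then start with `μ` weakly to
the right of `ν` and end with `μ` at `0` by row `m`, so they meet on some horizontal line
`1 ≤ k ≤ m`. Exchanging their first `k` rows, for the last such `k`, gives two paths with `m`
rows each: the second begins with the full row, which is dropped, and still avoids `λ` because
after their last meeting `ν` stays weakly to the right of `μ`. The exchanged pair has the same
last meeting line, so the exchange is an involution on pairs of antitone sequences; hence the
map is injective. This is the Lindström–Gessel–Viennot tail swap.
-/

/-- The paths meet on the horizontal grid line `y`: the segments `[P y, P (y - 1)]` and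
`[Q y, Q (y - 1)]` in which they cross that line overlap. -/
def Crosses (P Q : ℕ → ℕ) (y : ℕ) : Prop := P y ≤ Q (y - 1) ∧ Q y ≤ P (y - 1)

instance (P Q : ℕ → ℕ) : DecidablePred (Crosses P Q) :=
  fun _ => inferInstanceAs (Decidable (_ ∧ _))

/-- `0` when the paths do not meet on any of the lines `1, …, m`. -/
def lastCrossing (m : ℕ) (P Q : ℕ → ℕ) : ℕ := Nat.findGreatest (Crosses P Q) m

def tailSwap (k : ℕ) (P Q : ℕ → ℕ) : (ℕ → ℕ) × (ℕ → ℕ) :=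
  (fun y => if y < k then Q y else P y, fun y => if y < k then P y else Q y)

def switchAtLastCrossing (m : ℕ) (P Q : ℕ → ℕ) : (ℕ → ℕ) × (ℕ → ℕ) :=
  tailSwap (lastCrossing m P Q) P Q

section TailSwap

variable {k y : ℕ} {P Q : ℕ → ℕ}

lemma tailSwap_tailSwap (k : ℕ) (P Q : ℕ → ℕ) :
    tailSwap k (tailSwap k P Q).1 (tailSwap k P Q).2 = (P, Q) := by
  ext y <;> simp only [tailSwap] <;> split_ifs <;> rfl

lemma tailSwap_fst_of_le (hy : k ≤ y) : (tailSwap k P Q).1 y = P y :=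
  if_neg (not_lt.2 hy)

lemma tailSwap_snd_of_le (hy : k ≤ y) : (tailSwap k P Q).2 y = Q y :=
  if_neg (not_lt.2 hy)

lemma tailSwap_snd_of_lt (hy : y < k) : (tailSwap k P Q).2 y = P y :=
  if_pos hy

lemma crosses_tailSwap_iff (hy : k < y) :
    Crosses (tailSwap k P Q).1 (tailSwap k P Q).2 y ↔ Crosses P Q y := by
  simp only [Crosses, tailSwap, if_neg (show ¬ y < k by omega),
    if_neg (show ¬ y - 1 < k by omega)]

lemma crosses_tailSwap_self (hP : Antitone P) (hQ : Antitone Q) (hk : k ≠ 0) :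
    Crosses (tailSwap k P Q).1 (tailSwap k P Q).2 k := by
  simp only [Crosses, tailSwap, lt_irrefl, if_false, if_pos (show k - 1 < k by omega)]
  exact ⟨hP (Nat.sub_le k 1), hQ (Nat.sub_le k 1)⟩

lemma antitone_tailSwap_fst (hP : Antitone P) (hQ : Antitone Q) (hk : k ≠ 0 → Crosses P Q k) :
    Antitone (tailSwap k P Q).1 := by
  intro a b hab
  simp only [tailSwap]
  split_ifs with hb ha ha
  · exact hQ hab
  · omega
  · calc P b ≤ P k := hP (not_lt.1 hb)
      _ ≤ Q (k - 1) := (hk (by omega)).1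
      _ ≤ Q a := hQ (by omega)
  · exact hP hab

lemma antitone_tailSwap_snd (hP : Antitone P) (hQ : Antitone Q) (hk : k ≠ 0 → Crosses P Q k) :
    Antitone (tailSwap k P Q).2 := by
  intro a b hab
  simp only [tailSwap]
  split_ifs with hb ha ha
  · exact hP hab
  · omega
  · calc Q b ≤ Q k := hQ (not_lt.1 hb)
      _ ≤ P (k - 1) := (hk (by omega)).2
      _ ≤ P a := hP (by omega)
  · exact hQ hab

end TailSwap

section LastCrossing

variable {m y : ℕ} {P Q : ℕ → ℕ}

lemma lastCrossing_le : lastCrossing m P Q ≤ m := Nat.findGreatest_le m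

lemma crosses_lastCrossing (h : lastCrossing m P Q ≠ 0) : Crosses P Q (lastCrossing m P Q) :=
  Nat.findGreatest_of_ne_zero rfl h

lemma not_crosses_of_lastCrossing_lt (hy : lastCrossing m P Q < y) (hym : y ≤ m) :
    ¬ Crosses P Q y :=
  Nat.findGreatest_is_greatest hy hym

lemma exists_crosses (hQ : Antitone Q) (h0 : Q 0 ≤ P 0) (hm : 1 ≤ m) (hPm : P m ≤ Q (m - 1)) :
    ∃ y, 1 ≤ y ∧ y ≤ m ∧ Crosses P Q y := by
  induction m, hm using Nat.le_induction with
  | base => exact ⟨1, le_rfl, le_rfl, hPm, (hQ zero_le_one).trans h0⟩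
  | succ m hm ih =>
    by_cases h : P m ≤ Q (m - 1)
    · obtain ⟨y, hy1, hym, hy⟩ := ih h
      exact ⟨y, hy1, hym.trans m.le_succ, hy⟩
    · exact ⟨m + 1, by omega, le_rfl, hPm,
        (hQ m.le_succ).trans ((hQ (m.sub_le 1)).trans (not_le.1 h).le)⟩

lemma one_le_lastCrossing (hQ : Antitone Q) (h0 : Q 0 ≤ P 0) (hm : 1 ≤ m)
    (hPm : P m ≤ Q (m - 1)) : 1 ≤ lastCrossing m P Q := by
  obtain ⟨y, hy1, hym, hy⟩ := exists_crosses hQ h0 hm hPm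
  exact hy1.trans (Nat.le_findGreatest hym hy)

lemma le_of_lastCrossing_le (hQ : Antitone Q) (hPm : P m ≤ Q m) (hy : lastCrossing m P Q ≤ y)
    (hym : y ≤ m) : P y ≤ Q y := by
  induction hym using Nat.decreasingInduction with
  | self => exact hPm
  | of_succ y hym ih =>
    have hnot := not_crosses_of_lastCrossing_lt (P := P) (Q := Q) (by omega) hym
    simp only [Crosses, not_and, not_le] at hnot
    exact (hnot ((ih (by omega)).trans (hQ y.le_succ))).le.trans (hQ y.le_succ)

lemma lastCrossing_switchAtLastCrossing (hP : Antitone P) (hQ : Antitone Q) :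
    lastCrossing m (switchAtLastCrossing m P Q).1 (switchAtLastCrossing m P Q).2 =
      lastCrossing m P Q := by
  rw [lastCrossing, Nat.findGreatest_eq_iff]
  exact ⟨lastCrossing_le, crosses_tailSwap_self hP hQ,
    fun y hy hym => (crosses_tailSwap_iff hy).not.2 (not_crosses_of_lastCrossing_lt hy hym)⟩

lemma switchAtLastCrossing_involutive (hP : Antitone P) (hQ : Antitone Q) :
    switchAtLastCrossing m (switchAtLastCrossing m P Q).1 (switchAtLastCrossing m P Q).2 =
      (P, Q) := by
  rw [switchAtLastCrossing, lastCrossing_switchAtLastCrossing hP hQ]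
  exact tailSwap_tailSwap _ P Q

end LastCrossing

/-- The paths counted by `latticeN m N lam`, as their row-length sequences extended by zero
beyond row `m`. -/
def latticePaths (m N : ℕ) (lam : ℕ → ℕ) : Set (ℕ → ℕ) :=
  {f | Antitone f ∧ (∀ i, f i ≤ N) ∧ (∀ i, m ≤ i → f i = 0) ∧ lam ≤ f}

def extendByZero {m N : ℕ} (mu : Fin m → Fin (N + 1)) : ℕ → ℕ :=
  fun i => if h : i < m then mu ⟨i, h⟩ else 0

section LatticePaths

variable {m N : ℕ} {lam : ℕ → ℕ}

lemma extendByZero_injective : Function.Injective (extendByZero (m := m) (N := N)) := by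
  intro mu mu' h
  funext i
  have hi := congrFun h i
  simp only [extendByZero, dif_pos i.isLt] at hi
  exact Fin.ext hi

lemma latticePaths_subset_range :
    latticePaths m N lam ⊆ Set.range (extendByZero (m := m) (N := N)) := by
  rintro f ⟨-, hfN, hf0, -⟩
  refine ⟨fun i => ⟨f i, Nat.lt_succ_of_le (hfN i)⟩, funext fun i => ?_⟩
  simp only [extendByZero]
  split_ifs with hi
  · rfl
  · exact (hf0 i (not_lt.1 hi)).symm

lemma finite_latticePaths : (latticePaths m N lam).Finite :=
  (Set.finite_range _).subset latticePaths_subset_range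

lemma extendByZero_mem_latticePaths_iff (hlam : ∀ i, m ≤ i → lam i = 0)
    (mu : Fin m → Fin (N + 1)) :
    extendByZero mu ∈ latticePaths m N lam ↔
      (∀ i j : Fin m, i ≤ j → mu j ≤ mu i) ∧ ∀ i : Fin m, lam i ≤ (mu i : ℕ) := by
  constructor
  · rintro ⟨hanti, -, -, hlam_le⟩
    refine ⟨fun i j hij => ?_, fun i => ?_⟩
    · simpa [extendByZero] using hanti (show (i : ℕ) ≤ j from hij)
    · simpa [extendByZero] using hlam_le i
  · rintro ⟨hanti, hlam_le⟩
    refine ⟨fun a b hab => ?_, fun i => ?_, fun i hi => ?_, fun i => ?_⟩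
    · simp only [extendByZero]
      split_ifs with hb ha ha
      · exact hanti ⟨a, ha⟩ ⟨b, hb⟩ hab
      · omega
      · exact Nat.zero_le _
      · exact le_rfl
    · simp only [extendByZero]
      split_ifs
      · exact Nat.lt_succ_iff.1 (mu _).isLt
      · exact Nat.zero_le N
    · simp [extendByZero, not_lt.2 hi]
    · simp only [extendByZero]
      split_ifs with hi
      · exact hlam_le ⟨i, hi⟩
      · exact (hlam i (not_lt.1 hi)).le

lemma latticeN_eq_ncard (hlam : ∀ i, m ≤ i → lam i = 0) :
    latticeN m N lam = (latticePaths m N lam).ncard := by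
  classical
  have himage : latticePaths m N lam = extendByZero '' ((Finset.univ.filter
      fun mu : Fin m → Fin (N + 1) =>
        (∀ i j : Fin m, i ≤ j → mu j ≤ mu i) ∧ ∀ i : Fin m, lam i ≤ (mu i : ℕ)) :
          Set (Fin m → Fin (N + 1))) := by
    ext f
    simp only [Set.mem_image, Finset.coe_filter, Finset.mem_univ, true_and]
    constructor
    · intro hf
      obtain ⟨mu, rfl⟩ := latticePaths_subset_range hf
      exact ⟨mu, (extendByZero_mem_latticePaths_iff hlam mu).1 hf, rfl⟩
    · rintro ⟨mu, hmu, rfl⟩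
      exact (extendByZero_mem_latticePaths_iff hlam mu).2 hmu
  rw [himage, Set.ncard_image_of_injective _ extendByZero_injective, Set.ncard_coe_finset]
  rfl

end LatticePaths

def prependRow (N : ℕ) (f : ℕ → ℕ) : ℕ → ℕ
  | 0 => N
  | i + 1 => f i

lemma prependRow_injective (N : ℕ) : Function.Injective (prependRow N) :=
  fun _ _ h => funext fun i => congrFun h (i + 1)

section Switch

variable {m N : ℕ} {lam P Q : ℕ → ℕ}

lemma prependRow_mem_latticePaths (hlam : Antitone lam) (hN : lam 0 ≤ N) (hm : 1 ≤ m)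
    (hP : P ∈ latticePaths (m - 1) N lam) : prependRow N P ∈ latticePaths m N lam := by
  obtain ⟨hanti, hPN, hP0, hlamP⟩ := hP
  refine ⟨fun a b hab => ?_, fun i => ?_, fun i hi => ?_, fun i => ?_⟩
  · match a, b with
    | 0, 0 => exact le_rfl
    | 0, b + 1 => exact hPN b
    | a + 1, b + 1 => exact hanti (Nat.le_of_succ_le_succ hab)
  · cases i with
    | zero => exact le_rfl
    | succ i => exact hPN i
  · obtain ⟨i, rfl⟩ := Nat.exists_eq_add_of_le' (hm.trans hi)
    exact hP0 i (by omega)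
  · cases i with
    | zero => exact hN
    | succ i => exact (hlam i.le_succ).trans (hlamP i)

lemma switchAtLastCrossing_fst_mem_latticePaths (hP : P ∈ latticePaths m N lam)
    (hQ : Q ∈ latticePaths (m + 1) N lam) :
    (switchAtLastCrossing m P Q).1 ∈ latticePaths m N lam := by
  obtain ⟨hPa, hPN, hP0, hlamP⟩ := hP
  obtain ⟨hQa, hQN, -, hlamQ⟩ := hQ
  refine ⟨antitone_tailSwap_fst hPa hQa crosses_lastCrossing, fun i => ?_, fun i hi => ?_,
    fun i => ?_⟩
  · simp only [switchAtLastCrossing, tailSwap]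
    split_ifs
    exacts [hQN i, hPN i]
  · rw [switchAtLastCrossing, tailSwap_fst_of_le (lastCrossing_le.trans hi)]
    exact hP0 i hi
  · simp only [switchAtLastCrossing, tailSwap]
    split_ifs
    exacts [hlamQ i, hlamP i]

lemma switchAtLastCrossing_snd_mem_latticePaths (hP : P ∈ latticePaths m N lam)
    (hQ : Q ∈ latticePaths (m + 1) N lam) :
    (switchAtLastCrossing m P Q).2 ∈ latticePaths (m + 1) N lam := by
  obtain ⟨hPa, hPN, -, hlamP⟩ := hP
  obtain ⟨hQa, hQN, hQ0, hlamQ⟩ := hQ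
  refine ⟨antitone_tailSwap_snd hPa hQa crosses_lastCrossing, fun i => ?_, fun i hi => ?_,
    fun i => ?_⟩
  · simp only [switchAtLastCrossing, tailSwap]
    split_ifs
    exacts [hPN i, hQN i]
  · rw [switchAtLastCrossing, tailSwap_snd_of_le (lastCrossing_le.trans (by omega))]
    exact hQ0 i hi
  · simp only [switchAtLastCrossing, tailSwap]
    split_ifs
    exacts [hlamP i, hlamQ i]

lemma le_switchAtLastCrossing_snd (hP : ∀ i, m ≤ i → P i = 0) (hQ : Antitone Q) :
    P ≤ (switchAtLastCrossing m P Q).2 := by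
  intro y
  by_cases hy : y < lastCrossing m P Q
  · exact (tailSwap_snd_of_lt hy).ge
  rw [switchAtLastCrossing, tailSwap_snd_of_le (not_lt.1 hy)]
  by_cases hym : y ≤ m
  · exact le_of_lastCrossing_le hQ ((hP m le_rfl).trans_le (Nat.zero_le _)) (not_lt.1 hy) hym
  · rw [hP y (by omega)]
    exact Nat.zero_le _

lemma switchAtLastCrossing_snd_zero (hm : 1 ≤ m) (hPm : P m = 0) (hQ : Antitone Q)
    (h0 : Q 0 ≤ P 0) : (switchAtLastCrossing m P Q).2 0 = P 0 :=
  tailSwap_snd_of_lt (one_le_lastCrossing hQ h0 hm (hPm.trans_le (Nat.zero_le _)))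

end Switch

lemma eq_of_switchAtLastCrossing_eq {m : ℕ} {P Q P' Q' : ℕ → ℕ} (hP : Antitone P)
    (hQ : Antitone Q) (hP' : Antitone P') (hQ' : Antitone Q')
    (h : switchAtLastCrossing m P Q = switchAtLastCrossing m P' Q') : (P, Q) = (P', Q') := by
  rw [← switchAtLastCrossing_involutive (m := m) hP hQ, h, switchAtLastCrossing_involutive hP' hQ']

def switchBelowFullRow (m N : ℕ) (x : (ℕ → ℕ) × (ℕ → ℕ)) : (ℕ → ℕ) × (ℕ → ℕ) :=
  let y := switchAtLastCrossing m (prependRow N x.1) x.2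
  (y.1, fun i => y.2 (i + 1))

section SwitchBelowFullRow

variable {m N : ℕ} {lam : ℕ → ℕ}

lemma mapsTo_switchBelowFullRow (hlam : Antitone lam) (hN : lam 0 ≤ N) (hm : 1 ≤ m) :
    Set.MapsTo (switchBelowFullRow m N) (latticePaths (m - 1) N lam ×ˢ latticePaths (m + 1) N lam)
      (latticePaths m N lam ×ˢ latticePaths m N lam) := by
  rintro ⟨mu, nu⟩ ⟨hmu, hnu⟩
  have hP := prependRow_mem_latticePaths hlam hN hm hmu
  have hR := switchAtLastCrossing_snd_mem_latticePaths hP hnu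
  refine ⟨switchAtLastCrossing_fst_mem_latticePaths hP hnu,
    hR.1.comp_monotone fun a b h => Nat.succ_le_succ h, fun i => hR.2.1 _,
    fun i hi => hR.2.2.1 _ (by omega), fun i => ?_⟩
  exact (hmu.2.2.2 i).trans (le_switchAtLastCrossing_snd hP.2.2.1 hnu.1 (i + 1))

lemma injOn_switchBelowFullRow (hlam : Antitone lam) (hN : lam 0 ≤ N) (hm : 1 ≤ m) :
    Set.InjOn (switchBelowFullRow m N)
      (latticePaths (m - 1) N lam ×ˢ latticePaths (m + 1) N lam) := by
  rintro ⟨mu, nu⟩ ⟨hmu, hnu⟩ ⟨mu', nu'⟩ ⟨hmu', hnu'⟩ h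
  have hP := prependRow_mem_latticePaths hlam hN hm hmu
  have hP' := prependRow_mem_latticePaths hlam hN hm hmu'
  simp only [switchBelowFullRow, Prod.mk.injEq] at h
  have hswitch : switchAtLastCrossing m (prependRow N mu) nu =
      switchAtLastCrossing m (prependRow N mu') nu' := by
    refine Prod.ext h.1 (funext fun i => ?_)
    cases i with
    | zero =>
      rw [switchAtLastCrossing_snd_zero hm (hP.2.2.1 m le_rfl) hnu.1 (hnu.2.1 0),
        switchAtLastCrossing_snd_zero hm (hP'.2.2.1 m le_rfl) hnu'.1 (hnu'.2.1 0)]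
      rfl
    | succ i => exact congrFun h.2 i
  have hpaths := eq_of_switchAtLastCrossing_eq hP.1 hnu.1 hP'.1 hnu'.1 hswitch
  simp only [Prod.mk.injEq] at hpaths ⊢
  exact ⟨prependRow_injective N hpaths.1, hpaths.2⟩

theorem ncard_latticePaths_mul_le (hlam : Antitone lam) (hN : lam 0 ≤ N) (hm : 1 ≤ m) :
    (latticePaths (m - 1) N lam).ncard * (latticePaths (m + 1) N lam).ncard ≤
      (latticePaths m N lam).ncard ^ 2 := by
  rw [sq, ← Set.ncard_prod, ← Set.ncard_prod]
  exact Set.ncard_le_ncard_of_injOn _ (mapsTo_switchBelowFullRow hlam hN hm)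
    (injOn_switchBelowFullRow hlam hN hm) (finite_latticePaths.prod finite_latticePaths)

end SwitchBelowFullRow

lemma IsPartitionFun.eq_zero_of_conjPart_le {lam : ℕ → ℕ} (hlam : IsPartitionFun lam) {i : ℕ}
    (hi : conjPart lam 0 ≤ i) : lam i = 0 := by
  obtain ⟨hanti, r, hr⟩ := hlam
  by_contra h
  have hfin : {j | 0 < lam j}.Finite :=
    (Set.finite_Iio r).subset fun j hj => not_le.1 fun hjr => hj.ne' (hr j hjr)
  have hsub : Set.Iic i ⊆ {j | 0 < lam j} :=
    fun j hj => (Nat.pos_of_ne_zero h).trans_le (hanti hj)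
  have := Set.ncard_le_ncard hsub hfin
  rw [Set.ncard_Iic_nat, ← Nat.card_coe_set_eq] at this
  exact absurd hi (not_le.2 this)

/-- N(m−1, n+1, λ) · N(m+1, n+1, λ) ≤ N(m, n+1, λ)², i.e.
N(m, n, λ) is log-concave in m for fixed n. -/
theorem latticeN_ineq_two (lam : ℕ → ℕ) (hlam : IsPartitionFun lam)
    (m n : ℕ) (hm : conjPart lam 0 + 1 ≤ m) (hn : lam 0 ≤ n + 1) :
    latticeN (m - 1) (n + 1) lam * latticeN (m + 1) (n + 1) lam ≤
      latticeN m (n + 1) lam ^ 2 := by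
  have hvanish : ∀ i, m - 1 ≤ i → lam i = 0 :=
    fun i hi => hlam.eq_zero_of_conjPart_le (by omega)
  rw [latticeN_eq_ncard hvanish, latticeN_eq_ncard fun i hi => hvanish i (by omega),
    latticeN_eq_ncard fun i hi => hvanish i (by omega)]
  exact ncard_latticePaths_mul_le hlam.1 hn (by omega)
end

section
/- For any positive integer n, the sequence of binomial coefficients m ↦ C(m+n, n) is log-concave in m, and more strongly, for all sequences of partial-sum iterates: applying the partial-sum operator to any log-concave positive sequence preserves log-concavity; in particular C(m+n, n) = ∑_{k=0}^m C(k+n−1, n−1) is log-concave in m by induction on n. -/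
/-!
For a positive log-concave sequence the ratios `x (i + 1) / x i` decrease, i.e.
`x (m + 1) * x i ≤ x m * x (i + 1)` for `i ≤ m`. Summing over `i < m` gives
`x (m + 1) * X (m - 1) ≤ x m * X m`, and since `X (m + 1) = X m + x (m + 1)` this is exactly
`X (m - 1) * X (m + 1) ≤ X m ^ 2`. By the hockey-stick identity `m ↦ C(m + n + 1, n + 1)` is the
partial-sum sequence of `m ↦ C(m + n, n)`, so induction on `n` from the constant sequence
`C(m, 0) = 1` handles the binomial coefficients.
-/

open Finset

section PartialSums

variable {R : Type*} [CommRing R] [LinearOrder R] [IsStrictOrderedRing R]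
  {x : ℕ → R} {l : ℕ}

theorem mul_le_mul_of_logConcave (hpos : ∀ i ≤ l, 0 < x i)
    (hlc : ∀ i, i + 2 ≤ l → x i * x (i + 2) ≤ x (i + 1) ^ 2) {i m : ℕ} (him : i ≤ m)
    (hml : m < l) : x (m + 1) * x i ≤ x m * x (i + 1) := by
  induction him using Nat.decreasingInduction with
  | self => rw [mul_comm]
  | of_succ i hi ih =>
    have hx : 0 < x (i + 2) := hpos _ (by omega)
    refine le_of_mul_le_mul_right ?_ hx
    calc x (m + 1) * x i * x (i + 2) ≤ x (m + 1) * x (i + 1) ^ 2 := by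
          rw [mul_assoc]; exact mul_le_mul_of_nonneg_left (hlc i (by omega)) (hpos _ (by omega)).le
      _ = x (m + 1) * x (i + 1) * x (i + 1) := by ring
      _ ≤ x m * x (i + 2) * x (i + 1) := mul_le_mul_of_nonneg_right ih (hpos _ (by omega)).le
      _ = x m * x (i + 1) * x (i + 2) := by ring

theorem mul_sum_range_le_of_logConcave (hpos : ∀ i ≤ l, 0 < x i)
    (hlc : ∀ i, i + 2 ≤ l → x i * x (i + 2) ≤ x (i + 1) ^ 2) {m : ℕ} (hml : m < l) :
    x (m + 1) * ∑ i ∈ range m, x i ≤ x m * ∑ i ∈ range (m + 1), x i := by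
  rw [mul_sum, mul_sum, sum_range_succ']
  have hx0 : 0 ≤ x m * x 0 := (mul_pos (hpos m hml.le) (hpos 0 (Nat.zero_le l))).le
  have hterms : ∑ i ∈ range m, x (m + 1) * x i ≤ ∑ i ∈ range m, x m * x (i + 1) :=
    sum_le_sum fun i hi ↦ mul_le_mul_of_logConcave hpos hlc (mem_range.1 hi).le hml
  linarith

theorem sum_range_logConcave (hpos : ∀ i ≤ l, 0 < x i)
    (hlc : ∀ i, i + 2 ≤ l → x i * x (i + 2) ≤ x (i + 1) ^ 2) {m : ℕ} (hml : m < l) :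
    (∑ i ∈ range m, x i) * ∑ i ∈ range (m + 2), x i ≤ (∑ i ∈ range (m + 1), x i) ^ 2 := by
  have key := mul_sum_range_le_of_logConcave hpos hlc hml
  rw [sum_range_succ _ (m + 1), sum_range_succ _ m] at *
  linear_combination key

end PartialSums

theorem choose_add_logConcave (n m : ℕ) :
    (m + n).choose n * (m + 2 + n).choose n ≤ (m + 1 + n).choose n ^ 2 := by
  induction n generalizing m with
  | zero => simp
  | succ n ih =>
    have hockey (j : ℕ) :
        ∑ i ∈ range (j + 1), ((i + n).choose n : ℤ) = (j + n + 1).choose (n + 1) :=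
      mod_cast Nat.sum_range_add_choose j n
    have h := sum_range_logConcave (x := fun i ↦ ((i + n).choose n : ℤ)) (l := m + 2)
      (fun i _ ↦ mod_cast Nat.choose_pos (by omega)) (fun i _ ↦ mod_cast ih i)
      (m := m + 1) (by omega)
    rw [hockey, hockey, hockey] at h
    rw [← add_assoc, ← add_assoc, ← add_assoc]
    exact_mod_cast h

open Finset in
theorem partialSum_logConcave_and_choose_general (n : ℕ) :
    (∀ (l : ℕ) (x : ℕ → ℝ), (∀ i, i ≤ l → 0 < x i) →
      (∀ i, 0 < i → i < l → x (i - 1) * x (i + 1) ≤ x i ^ 2) →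
      ∀ m, 0 < m → m < l →
        (∑ i ∈ range m, x i) * (∑ i ∈ range (m + 2), x i) ≤
          (∑ i ∈ range (m + 1), x i) ^ 2) ∧
    (∀ m, 0 < m →
      Nat.choose (m - 1 + n) n * Nat.choose (m + 1 + n) n ≤
        Nat.choose (m + n) n ^ 2) := by
  refine ⟨fun l x hpos hlc m _ hml ↦ sum_range_logConcave hpos (fun i hi ↦ ?_) hml, ?_⟩
  · simpa using hlc (i + 1) i.succ_pos (by omega)
  · rintro (_ | m) hm
    · omega
    · exact choose_add_logConcave n m

open Finset in
/-- the partial-sum operator preserves log-concavity of positive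
sequences, and consequently (via the hockey-stick identity
C(m+n, n) = ∑_{k=0}^m C(k+n−1, n−1) and induction on n) for every positive
integer n the sequence m ↦ C(m+n, n) is log-concave in m. -/
theorem partialSum_logConcave_and_choose (n : ℕ) (hn : 0 < n) :
    (∀ (l : ℕ) (x : ℕ → ℝ), (∀ i, i ≤ l → 0 < x i) →
      (∀ i, 0 < i → i < l → x (i - 1) * x (i + 1) ≤ x i ^ 2) →
      ∀ m, 0 < m → m < l →
        (∑ i ∈ range m, x i) * (∑ i ∈ range (m + 2), x i) ≤
          (∑ i ∈ range (m + 1), x i) ^ 2) ∧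
    (∀ m, 0 < m →
      Nat.choose (m - 1 + n) n * Nat.choose (m + 1 + n) n ≤
        Nat.choose (m + n) n ^ 2) :=
  partialSum_logConcave_and_choose_general n
end
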